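/- For every nonzero f ∈ I, the signature S(f) belongs to NS(Syz F); that is, S(f) is not the leading module term of any nonzero syzygy of F. -/

import Mathlib

open MvPolynomial

namespace F5

noncomputable section
open scoped Classical

/-- Monomials (power products) in `n` variables, represented by exponent vectors. -/
abbrev Mon (n : ℕ) : Type := Fin n →₀ ℕ

/-- Module terms `t·eₗ` of the free module `Pᵐ`. -/
abbrev MTerm (n m : ℕ) : Type := (Fin n →₀ ℕ) × Fin m

/-- Action of a monomial on a module term: `u • (t eₗ) = (u t) eₗ`. -/
def mact {n m : ℕ} (u : Mon n) (σ : MTerm n m) : MTerm n m := (u + σ.1, σ.2)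

/-- An admissible order on monomials: a linear order with `1 ≤ t` and
compatibility with multiplication. -/
structure AdmissibleOrder (n : ℕ) where
  ord : LinearOrder (Mon n)
  one_le : ∀ t : Mon n, ord.le 0 t
  mul_lt_mul : ∀ s t u : Mon n, ord.lt s t → ord.lt (u + s) (u + t)

/-- An admissible module order on module terms: a linear well-order compatible
with the monomial action, and such that `σ ≤ u σ`. -/
structure ModuleOrder (n m : ℕ) where
  ord : LinearOrder (MTerm n m)
  wf : WellFounded ord.lt
  mul_lt_mul : ∀ (σ τ : MTerm n m) (u : Mon n), ord.lt σ τ → ord.lt (mact u σ) (mact u τ)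
  le_mul : ∀ (σ : MTerm n m) (u : Mon n), ord.le σ (mact u σ)

variable {k : Type*} [Field k] {n m : ℕ}

/-- The leading monomial of a polynomial with respect to `μ` (junk value `0` for `f = 0`). -/
noncomputable def pLT (μ : AdmissibleOrder n) (f : MvPolynomial (Fin n) k) : Mon n :=
  if h : f.support.Nonempty then @Finset.max' _ μ.ord f.support h else 0

/-- The leading coefficient of a polynomial with respect to `μ`. -/
noncomputable def pLC (μ : AdmissibleOrder n) (f : MvPolynomial (Fin n) k) : k :=
  f.coeff (pLT μ f)

/-- The set (finset) of module terms occurring in an element of `Pᵐ`. -/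
noncomputable def msupport (u : Fin m → MvPolynomial (Fin n) k) : Finset (MTerm n m) :=
  letI := Classical.decEq (MTerm n m)
  Finset.univ.biUnion fun l => (u l).support.image fun t => (t, l)

/-- A junk default module term (needs `m ≠ 0`). -/
def mdefault [NeZero m] : MTerm n m := (0, ⟨0, Nat.pos_of_ne_zero (NeZero.ne m)⟩)

/-- The leading module term of a nonzero element of `Pᵐ` with respect to `μ'`
(junk value for `0`). -/
noncomputable def mLT [NeZero m] (μ' : ModuleOrder n m) (u : Fin m → MvPolynomial (Fin n) k) :
    MTerm n m :=
  if h : (msupport u).Nonempty then @Finset.max' _ μ'.ord _ h else mdefault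

/-- The map `v : Pᵐ → P`, `v(eᵢ) = fᵢ`. -/
noncomputable def vmap (F : Fin m → MvPolynomial (Fin n) k)
    (u : Fin m → MvPolynomial (Fin n) k) : MvPolynomial (Fin n) k :=
  ∑ i, u i * F i

/-- The ideal `I = (f₁, …, fₘ)`. -/
noncomputable def idealI (F : Fin m → MvPolynomial (Fin n) k) : Ideal (MvPolynomial (Fin n) k) :=
  Ideal.span (Set.range F)

/-- `LT(Syz F)`: leading module terms of nonzero syzygies of `F`. -/
def LTSyz [NeZero m] (μ' : ModuleOrder n m) (F : Fin m → MvPolynomial (Fin n) k) :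
    Set (MTerm n m) :=
  {σ | ∃ s : Fin m → MvPolynomial (Fin n) k, s ≠ 0 ∧ vmap F s = 0 ∧ mLT μ' s = σ}

/-- The signature `S(f)`: the `μ'`-minimum of `{LT(u) : v(u) = f}` (junk for `f = 0` or
`f ∉ I`). -/
noncomputable def sig [NeZero m] (μ' : ModuleOrder n m) (F : Fin m → MvPolynomial (Fin n) k)
    (f : MvPolynomial (Fin n) k) : MTerm n m :=
  if hne : {σ : MTerm n m |
      ∃ u : Fin m → MvPolynomial (Fin n) k, u ≠ 0 ∧ vmap F u = f ∧ mLT μ' u = σ}.Nonempty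
  then μ'.wf.min _ hne else mdefault

/-- `f` S-reduces to `g` with `h`, with respect to `σ`. -/
noncomputable def SReduces [NeZero m] (μ : AdmissibleOrder n) (μ' : ModuleOrder n m)
    (F : Fin m → MvPolynomial (Fin n) k)
    (f h g : MvPolynomial (Fin n) k) (σ : MTerm n m) : Prop :=
  ∃ (t : Mon n) (α : k), α ≠ 0 ∧ g = f - (monomial t α) * h ∧
    (g = 0 ∨ μ.ord.lt (pLT μ g) (pLT μ f)) ∧
    μ'.ord.lt (sig μ' F ((monomial t (1 : k)) * h)) σ

/-- `f` is S-irreducible with respect to `σ`. -/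
noncomputable def SIrr [NeZero m] (μ : AdmissibleOrder n) (μ' : ModuleOrder n m)
    (F : Fin m → MvPolynomial (Fin n) k) (f : MvPolynomial (Fin n) k) (σ : MTerm n m) : Prop :=
  f = 0 ∨ ¬ ∃ h : MvPolynomial (Fin n) k, h ∈ idealI F ∧ h ≠ 0 ∧
    ∃ g : MvPolynomial (Fin n) k, SReduces μ μ' F f h g σ

/-- `G` is an S-Gröbner basis (of `I` w.r.t. `μ`, `F`, `μ'`). -/
noncomputable def IsSGB [NeZero m] (μ : AdmissibleOrder n) (μ' : ModuleOrder n m)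
    (F : Fin m → MvPolynomial (Fin n) k) (G : Set (MvPolynomial (Fin n) k)) : Prop :=
  (∀ g ∈ G, g ∈ idealI F ∧ g ≠ 0) ∧
  ∀ f : MvPolynomial (Fin n) k, f ∈ idealI F → f ≠ 0 → SIrr μ μ' F f (sig μ' F f) →
    ∃ g ∈ G, ∃ t : Mon n,
      pLT μ ((monomial t (1 : k)) * g) = pLT μ f ∧
      sig μ' F ((monomial t (1 : k)) * g) = sig μ' F f

/-- `LT(I)`: the set of leading monomials of nonzero elements of `I`. -/
def LTIdeal (μ : AdmissibleOrder n) (F : Fin m → MvPolynomial (Fin n) k) : Set (Mon n) :=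
  {t | ∃ f : MvPolynomial (Fin n) k, f ∈ idealI F ∧ f ≠ 0 ∧ pLT μ f = t}

/-- `φ(t)`: the `μ'`-minimum signature of nonzero elements of `I` with leading monomial `t`. -/
noncomputable def phi [NeZero m] (μ : AdmissibleOrder n) (μ' : ModuleOrder n m)
    (F : Fin m → MvPolynomial (Fin n) k) (t : Mon n) : MTerm n m :=
  if hne : {σ : MTerm n m | ∃ f : MvPolynomial (Fin n) k,
      f ∈ idealI F ∧ f ≠ 0 ∧ pLT μ f = t ∧ sig μ' F f = σ}.Nonempty
  then μ'.wf.min _ hne else mdefault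

/-- `f` is a primitive S-irreducible polynomial. -/
noncomputable def PrimSIrr [NeZero m] (μ : AdmissibleOrder n) (μ' : ModuleOrder n m)
    (F : Fin m → MvPolynomial (Fin n) k) (f : MvPolynomial (Fin n) k) : Prop :=
  f ∈ idealI F ∧ f ≠ 0 ∧ SIrr μ μ' F f (sig μ' F f) ∧
  ¬ ∃ (f' : MvPolynomial (Fin n) k) (t : Mon n),
      f' ∈ idealI F ∧ f' ≠ 0 ∧ t ≠ 0 ∧ SIrr μ μ' F f' (sig μ' F f') ∧
      pLT μ ((monomial t (1 : k)) * f') = pLT μ f ∧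
      sig μ' F ((monomial t (1 : k)) * f') = sig μ' F f

/-- The lcm of two monomials (pointwise maximum of exponents). -/
def lcmMon {n : ℕ} (s t : Mon n) : Mon n := t + (s - t)

/-- The term `u₁ = lcm(LT g₁, LT g₂)/(LC g₁ · LT g₁)` (when the first argument is `g₁`). -/
noncomputable def uterm (μ : AdmissibleOrder n) (g₁ g₂ : MvPolynomial (Fin n) k) :
    MvPolynomial (Fin n) k :=
  monomial (lcmMon (pLT μ g₁) (pLT μ g₂) - pLT μ g₁) (pLC μ g₁)⁻¹

/-- The S-polynomial of `g₁` and `g₂`. -/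
noncomputable def Spol (μ : AdmissibleOrder n) (g₁ g₂ : MvPolynomial (Fin n) k) :
    MvPolynomial (Fin n) k :=
  uterm μ g₁ g₂ * g₁ - uterm μ g₂ g₁ * g₂

/-- `(g₁, g₂)` is a normal pair. -/
noncomputable def NormalPair [NeZero m] (μ : AdmissibleOrder n) (μ' : ModuleOrder n m)
    (F : Fin m → MvPolynomial (Fin n) k) (g₁ g₂ : MvPolynomial (Fin n) k) : Prop :=
  PrimSIrr μ μ' F g₁ ∧ PrimSIrr μ μ' F g₂ ∧
  sig μ' F (uterm μ g₁ g₂ * g₁) =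
    mact (lcmMon (pLT μ g₁) (pLT μ g₂) - pLT μ g₁) (sig μ' F g₁) ∧
  sig μ' F (uterm μ g₂ g₁ * g₂) =
    mact (lcmMon (pLT μ g₂) (pLT μ g₁) - pLT μ g₂) (sig μ' F g₂) ∧
  sig μ' F (uterm μ g₁ g₂ * g₁) ≠ sig μ' F (uterm μ g₂ g₁ * g₂)


end
end F5

open F5 MvPolynomial

/-! If a syzygy `s` had leading term `S(f)`, subtracting a multiple of it from a representation
`u` of `f` with `LT(u) = S(f)` would cancel that term and give a representation of `f` with a
smaller leading term. -/

namespace F5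

variable {k : Type*} [Field k] {n m : ℕ}

lemma mem_msupport {u : Fin m → MvPolynomial (Fin n) k} {σ : MTerm n m} :
    σ ∈ msupport u ↔ (u σ.2).coeff σ.1 ≠ 0 := by
  simp [msupport, Prod.ext_iff]

lemma msupport_nonempty {u : Fin m → MvPolynomial (Fin n) k} (hu : u ≠ 0) :
    (msupport u).Nonempty := by
  contrapose! hu
  ext i t
  by_contra ht
  exact Finset.notMem_empty (t, i) (hu ▸ mem_msupport.mpr ht)

lemma vmap_sub_smul (F u s : Fin m → MvPolynomial (Fin n) k) (γ : k) :
    vmap F (u - γ • s) = vmap F u - γ • vmap F s := by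
  simp only [vmap, Pi.sub_apply, Pi.smul_apply, sub_mul, smul_mul_assoc, Finset.sum_sub_distrib,
    Finset.smul_sum]

lemma exists_vmap_eq {F : Fin m → MvPolynomial (Fin n) k} {f : MvPolynomial (Fin n) k}
    (hf : f ∈ idealI F) : ∃ u, vmap F u = f := by
  obtain ⟨u, hu⟩ := (Submodule.mem_span_range_iff_exists_fun _).mp hf
  exact ⟨u, by simpa [vmap, smul_eq_mul] using hu⟩

variable [NeZero m] (μ' : ModuleOrder n m)

lemma mLT_mem_msupport {u : Fin m → MvPolynomial (Fin n) k} (hu : u ≠ 0) :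
    mLT μ' u ∈ msupport u := by
  rw [mLT, dif_pos (msupport_nonempty hu)]
  exact @Finset.max'_mem _ μ'.ord _ _

lemma le_mLT {u : Fin m → MvPolynomial (Fin n) k} {τ : MTerm n m} (hτ : τ ∈ msupport u) :
    μ'.ord.le τ (mLT μ' u) := by
  rw [mLT, dif_pos ⟨τ, hτ⟩]
  exact @Finset.le_max' _ μ'.ord _ _ hτ

lemma mLT_sub_smul_lt {u s : Fin m → MvPolynomial (Fin n) k} {γ : k}
    (hus : mLT μ' u = mLT μ' s)
    (hγ : (u (mLT μ' s).2).coeff (mLT μ' s).1 = γ * (s (mLT μ' s).2).coeff (mLT μ' s).1)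
    (hne : u - γ • s ≠ 0) :
    μ'.ord.lt (mLT μ' (u - γ • s)) (mLT μ' s) := by
  have hcoeff (τ : MTerm n m) :
      ((u - γ • s) τ.2).coeff τ.1 = (u τ.2).coeff τ.1 - γ * (s τ.2).coeff τ.1 := by
    simp
  set τ := mLT μ' (u - γ • s)
  have hτ : τ ∈ msupport (u - γ • s) := mLT_mem_msupport μ' hne
  have hle : μ'.ord.le τ (mLT μ' s) := by
    by_cases hτu : τ ∈ msupport u
    · exact hus ▸ le_mLT μ' hτu
    · refine le_mLT μ' (mem_msupport.mpr fun hτs => ?_)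
      rw [mem_msupport, hcoeff, hτs, mul_zero, sub_zero] at hτ
      exact hτu (mem_msupport.mpr hτ)
  refine @lt_of_le_of_ne _ μ'.ord.toPartialOrder _ _ hle fun h => ?_
  rw [h, mem_msupport, hcoeff, hγ, sub_self] at hτ
  exact hτ rfl

variable (F : Fin m → MvPolynomial (Fin n) k)

lemma sig_le_mLT {f : MvPolynomial (Fin n) k} {u : Fin m → MvPolynomial (Fin n) k}
    (hu : u ≠ 0) (hvu : vmap F u = f) : μ'.ord.le (sig μ' F f) (mLT μ' u) := by
  have hmem : mLT μ' u ∈ {σ | ∃ u, u ≠ 0 ∧ vmap F u = f ∧ mLT μ' u = σ} := ⟨u, hu, hvu, rfl⟩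
  rw [sig, dif_pos ⟨_, hmem⟩]
  exact @le_of_not_gt _ μ'.ord _ _ (μ'.wf.not_lt_min _ hmem)

lemma exists_mLT_eq_sig {f : MvPolynomial (Fin n) k} (hfI : f ∈ idealI F) (hf : f ≠ 0) :
    ∃ u, u ≠ 0 ∧ vmap F u = f ∧ mLT μ' u = sig μ' F f := by
  obtain ⟨c, hc⟩ := exists_vmap_eq hfI
  have hc0 : c ≠ 0 := by
    rintro rfl
    exact hf (hc ▸ by simp [vmap])
  have hne : {σ | ∃ u, u ≠ 0 ∧ vmap F u = f ∧ mLT μ' u = σ}.Nonempty :=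
    ⟨_, c, hc0, hc, rfl⟩
  rw [sig, dif_pos hne]
  exact μ'.wf.min_mem _ hne

end F5

/-- for every nonzero `f ∈ I`, `S(f) ∈ NS(Syz F)`. -/
theorem stmt_4 {k : Type*} [Field k] {n m : ℕ} [NeZero m]
    (μ' : ModuleOrder n m) (F : Fin m → MvPolynomial (Fin n) k)
    (f : MvPolynomial (Fin n) k) (hfI : f ∈ idealI F) (hf : f ≠ 0) :
    sig μ' F f ∉ LTSyz μ' F := by
  rintro ⟨s, hs0, hsyz, hsLT⟩
  obtain ⟨u, -, hvu, huLT⟩ := exists_mLT_eq_sig μ' F hfI hf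
  have hsσ : (s (mLT μ' s).2).coeff (mLT μ' s).1 ≠ 0 :=
    mem_msupport.mp (mLT_mem_msupport μ' hs0)
  set γ : k := (u (mLT μ' s).2).coeff (mLT μ' s).1 / (s (mLT μ' s).2).coeff (mLT μ' s).1
  have hv : vmap F (u - γ • s) = f := by rw [vmap_sub_smul, hsyz, hvu, smul_zero, sub_zero]
  have hne : u - γ • s ≠ 0 := by
    rintro h
    exact hf (hv ▸ h ▸ by simp [vmap])
  have hlt := mLT_sub_smul_lt μ' (huLT.trans hsLT.symm) (div_mul_cancel₀ _ hsσ).symm hne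
  have hle := sig_le_mLT μ' F hne hv
  rw [← hsLT] at hle
  exact @not_le_of_gt _ μ'.ord.toPreorder _ _ hlt hle
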